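/- All paths shorter than a given cascading via-path include only nodes whose cascading via-paths are shorter: if q is an s–t path with c(q) < c(p̃_{s,v,t}) for some vertex v, then every vertex u lying on q satisfies c(p̃_{s,u,t}) < c(p̃_{s,v,t}). -/

import Mathlib

/-!
The cascading via-path of `u` is a shortest `s`–`t` path through `u`: splitting any `s`–`t`
path `q` at `u` gives an `s`–`u` path and a `u`–`t` path, which are no shorter than the tree
paths `p̃_{s,u}` and `p̃_{u,t}`. Hence `c(p̃_{s,u,t}) ≤ c(q) < c(p̃_{s,v,t})`.
-/

variable {V : Type*}

/-- `p` is a path from `u` to `w` in the digraph with edge relation `E`: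
a nonempty finite sequence of vertices beginning at `u` and ending at `w`
in which every consecutive pair of vertices is an edge. -/
def IsPath (E : V → V → Prop) (p : List V) (u w : V) : Prop :=
  p ≠ [] ∧ p.head? = some u ∧ p.getLast? = some w ∧ p.Chain' E

/-- The cost of a path: the sum of the weights of its edges. -/
def pathCost (c : V → V → ℝ) (p : List V) : ℝ :=
  ((p.zip p.tail).map fun e => c e.1 e.2).sum

/-- A shortest path from `u` to `w`: a path from `u` to `w` of minimum cost. -/
def IsShortestPath (E : V → V → Prop) (c : V → V → ℝ) (p : List V) (u w : V) : Prop :=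
  IsPath E p u w ∧ ∀ q, IsPath E q u w → pathCost c p ≤ pathCost c q

/-- A via-path for `v`: an `s`–`t` path of minimum cost among all `s`–`t`
paths passing through `v`. -/
def IsViaPath (E : V → V → Prop) (c : V → V → ℝ) (s t v : V) (p : List V) : Prop :=
  IsPath E p s t ∧ v ∈ p ∧ ∀ q, IsPath E q s t → v ∈ q → pathCost c p ≤ pathCost c q

/-- The minimum cost of an `s`–`t` path passing through `v`. -/
noncomputable def viaCost (E : V → V → Prop) (c : V → V → ℝ) (s t v : V) : ℝ :=
  sInf (pathCost c '' {p | IsPath E p s t ∧ v ∈ p})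

/-- A predecessor shortest path tree rooted at the source `s`: a map `b`
assigning to each vertex `v ≠ s` a vertex `b v` with an edge from `b v` to `v`,
such that iterating `b` from any `v` terminates at `s` and the resulting path
`pathTo v` (read from `s` to `v`) is a shortest path from `s` to `v`. -/
structure PredSPT (E : V → V → Prop) (c : V → V → ℝ) (s : V) where
  b : V → V
  pathTo : V → List V
  edge : ∀ v, v ≠ s → E (b v) v
  pathTo_src : pathTo s = [s]
  pathTo_step : ∀ v, v ≠ s → pathTo v = pathTo (b v) ++ [v]
  shortest : ∀ v, IsShortestPath E c (pathTo v) s v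

/-- A successor shortest path tree rooted at the target `t`: a map `f`
assigning to each vertex `v ≠ t` a vertex `f v` with an edge from `v` to `f v`,
such that iterating `f` from any `v` terminates at `t` and the resulting path
`pathFrom v` is a shortest path from `v` to `t`. -/
structure SuccSPT (E : V → V → Prop) (c : V → V → ℝ) (t : V) where
  f : V → V
  pathFrom : V → List V
  edge : ∀ v, v ≠ t → E v (f v)
  pathFrom_tgt : pathFrom t = [t]
  pathFrom_step : ∀ v, v ≠ t → pathFrom v = v :: pathFrom (f v)
  shortest : ∀ v, IsShortestPath E c (pathFrom v) v t

variable {E : V → V → Prop} {c : V → V → ℝ} {s t : V}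

/-- The cascading via-path (CVP) of a vertex `v`: the tree path `p̃_{s,v}`
followed by the tree path `p̃_{v,t}`. -/
def CVP (B : PredSPT E c s) (F : SuccSPT E c t) (v : V) : List V :=
  B.pathTo v ++ (F.pathFrom v).tail

/-- A reciprocal pointer chain (RPC): a nonempty sequence of vertices
`(v_1, …, v_n)` such that for all `1 ≤ i < n`, `b (v_{i+1}) = v_i` and
`f (v_i) = v_{i+1}` (as pointers of the two shortest path trees, so in
particular `v_{i+1} ≠ s` and `v_i ≠ t`). -/
def IsRPC (B : PredSPT E c s) (F : SuccSPT E c t) (r : List V) : Prop :=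
  r ≠ [] ∧ r.Chain' fun x y => y ≠ s ∧ x ≠ t ∧ B.b y = x ∧ F.f x = y

/-- A maximal RPC: an RPC whose set of vertices is not a (strict) subset of the
vertex set of any other RPC. -/
def IsMaximalRPC [DecidableEq V] (B : PredSPT E c s) (F : SuccSPT E c t)
    (r : List V) : Prop :=
  IsRPC B F r ∧
    ∀ r', IsRPC B F r' → r.toFinset ⊆ r'.toFinset → r'.toFinset = r.toFinset

/-- The Jaccard distance between the vertex sets of two paths. -/
noncomputable def jaccardDist [DecidableEq V] (p q : List V) : ℝ :=
  1 - ((p.toFinset ∩ q.toFinset).card : ℝ) / ((p.toFinset ∪ q.toFinset).card : ℝ)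

/-- A plateau: a nonempty sequence of vertices in which every consecutive pair
is an edge and all vertices have the same minimum via-path cost. -/
def IsPlateau (E : V → V → Prop) (c : V → V → ℝ) (s t : V) (q : List V) : Prop :=
  q ≠ [] ∧ q.Chain' fun x y => E x y ∧ viaCost E c s t x = viaCost E c s t y

/-- A maximal plateau: a plateau whose set of vertices is not a (strict) subset
of the vertex set of any other plateau. -/
def IsMaximalPlateau [DecidableEq V] (E : V → V → Prop) (c : V → V → ℝ)
    (s t : V) (q : List V) : Prop :=
  IsPlateau E c s t q ∧
    ∀ q', IsPlateau E c s t q' → q.toFinset ⊆ q'.toFinset → q'.toFinset = q.toFinset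

theorem pathCost_cons_cons (c : V → V → ℝ) (a b : V) (p : List V) :
    pathCost c (a :: b :: p) = c a b + pathCost c (b :: p) := by
  simp [pathCost]

theorem pathCost_append_cons (c : V → V → ℝ) (p : List V) (x : V) (r : List V) :
    pathCost c (p ++ x :: r) = pathCost c (p ++ [x]) + pathCost c (x :: r) := by
  induction p with
  | nil => simp [pathCost]
  | cons a p ih =>
    cases p with
    | nil => simp [pathCost]
    | cons b p =>
      simp only [List.cons_append, pathCost_cons_cons] at ih ⊢
      rw [ih, add_assoc]

theorem pathCost_append_tail (c : V → V → ℝ) {p r : List V} {x : V}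
    (hp : p.getLast? = some x) (hr : r.head? = some x) :
    pathCost c (p ++ r.tail) = pathCost c p + pathCost c r := by
  obtain ⟨p, rfl⟩ := List.getLast?_eq_some_iff.mp hp
  obtain ⟨r, rfl⟩ := List.head?_eq_some_iff.mp hr
  simpa using pathCost_append_cons c p x r

theorem IsPath.split {p q : List V} {u w x : V} (h : IsPath E (p ++ x :: q) u w) :
    IsPath E (p ++ [x]) u x ∧ IsPath E (x :: q) x w := by
  obtain ⟨-, hhead, hlast, hchain⟩ := h
  obtain ⟨hchain₁, hchain₂⟩ := List.isChain_split.mp hchain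
  refine ⟨⟨by simp, ?_, List.getLast?_concat, hchain₁⟩, ⟨by simp, rfl, ?_, hchain₂⟩⟩
  · cases p <;> simpa using hhead
  · simpa [List.getLast?_append] using hlast

theorem pathCost_CVP (B : PredSPT E c s) (F : SuccSPT E c t) (u : V) :
    pathCost c (CVP B F u) = pathCost c (B.pathTo u) + pathCost c (F.pathFrom u) :=
  pathCost_append_tail c (B.shortest u).1.2.2.1 (F.shortest u).1.2.1

theorem pathCost_CVP_le_of_mem (B : PredSPT E c s) (F : SuccSPT E c t) {q : List V} {u : V}
    (hq : IsPath E q s t) (hu : u ∈ q) : pathCost c (CVP B F u) ≤ pathCost c q := by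
  obtain ⟨p, r, rfl⟩ := List.append_of_mem hu
  obtain ⟨hp, hr⟩ := hq.split
  calc pathCost c (CVP B F u)
      = pathCost c (B.pathTo u) + pathCost c (F.pathFrom u) := pathCost_CVP B F u
    _ ≤ pathCost c (p ++ [u]) + pathCost c (u :: r) :=
        add_le_add ((B.shortest u).2 _ hp) ((F.shortest u).2 _ hr)
    _ = pathCost c (p ++ u :: r) := (pathCost_append_cons c p u r).symm

theorem shorter_paths_use_shorter_cvp_nodes_general
    {E : V → V → Prop} {c : V → V → ℝ} {s t : V}
    (B : PredSPT E c s) (F : SuccSPT E c t)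
    (v : V) (q : List V) (hq : IsPath E q s t)
    (hlt : pathCost c q < pathCost c (CVP B F v)) :
    ∀ u ∈ q, pathCost c (CVP B F u) < pathCost c (CVP B F v) :=
  fun _ hu => (pathCost_CVP_le_of_mem B F hq hu).trans_lt hlt

/-- All `s`–`t` paths shorter than a given CVP include only nodes
whose CVPs are shorter: if `c(q) < c(p̃_{s,v,t})`, then every vertex `u` on `q`
satisfies `c(p̃_{s,u,t}) < c(p̃_{s,v,t})`. -/
theorem shorter_paths_use_shorter_cvp_nodes [Fintype V] [DecidableEq V]
    {E : V → V → Prop} {c : V → V → ℝ} {s t : V}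
    (hc : ∀ u w, E u w → 0 ≤ c u w)
    (B : PredSPT E c s) (F : SuccSPT E c t)
    (v : V) (q : List V) (hq : IsPath E q s t)
    (hlt : pathCost c q < pathCost c (CVP B F v)) :
    ∀ u ∈ q, pathCost c (CVP B F u) < pathCost c (CVP B F v) :=
  shorter_paths_use_shorter_cvp_nodes_general B F v q hq hlt
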